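/- arXiv:1709.07343 — 2 statements merged into one kernel-verified Lean document; each statement's English description precedes it below -/
import Mathlib

section
/- Let (X_i)_{i ∈ I} be a cofiltered inverse system of spectral spaces with spectral transition maps (a functor from a cofiltered small category I to topological spaces, all values spectral, all transition maps spectral), and let X = lim_i X_i be its limit, realized as the subspace of compatible families inside the product ∏_i X_i. Then: (a) X is a spectral space and the projections X → X_i are spectral; (b) a continuous map Y → X from a spectral space Y is spectral if and only if all composites Y → X_i are spectral; (c) if Y is a spectral space with a spectral map Y → X such that all composites Y → X_i are generalizing, then Y → X is generalizing; (d) if moreover in (c) the map Y → X is surjective, then it is a quotient map. -/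
open CategoryTheory

universe u v

/-- A spectral space: a quasicompact topological space with a basis of quasicompact open
subsets stable under finite intersection, in which every irreducible closed subset has a
unique generic point. -/
def IsSpectralSpace (X : Type u) [TopologicalSpace X] : Prop :=
  CompactSpace X ∧ T0Space X ∧ QuasiSober X ∧
    ∃ B : Set (Set X), TopologicalSpace.IsTopologicalBasis B ∧
      (∀ U ∈ B, IsCompact U) ∧ ∀ U ∈ B, ∀ V ∈ B, U ∩ V ∈ B

/-- A subset is constructible if it lies in the Boolean algebra of subsets generated by the
quasicompact open subsets. -/
inductive IsConstructibleSet {X : Type u} [TopologicalSpace X] : Set X → Prop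
  | qcOpen (U : Set X) : IsOpen U → IsCompact U → IsConstructibleSet U
  | compl (S : Set X) : IsConstructibleSet S → IsConstructibleSet Sᶜ
  | union (S T : Set X) : IsConstructibleSet S → IsConstructibleSet T →
      IsConstructibleSet (S ∪ T)

/-- A subset is pro-constructible if it is an intersection of constructible subsets. -/
def IsProconstructible {X : Type u} [TopologicalSpace X] (S : Set X) : Prop :=
  ∃ 𝒮 : Set (Set X), (∀ T ∈ 𝒮, IsConstructibleSet T) ∧ S = ⋂₀ 𝒮

/-- A continuous map `f : X → Y` is generalizing if whenever `y ∈ Y` is a generalization of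
`f x` (i.e. `f x` lies in the closure of `{y}`), there exists a generalization `x'` of `x`
(i.e. `x` lies in the closure of `{x'}`) with `f x' = y`. -/
def IsGeneralizing {X : Type u} {Y : Type v} [TopologicalSpace X] [TopologicalSpace Y]
    (f : X → Y) : Prop :=
  ∀ x : X, ∀ y : Y, f x ∈ closure ({y} : Set Y) →
    ∃ x' : X, x ∈ closure ({x'} : Set X) ∧ f x' = y

/-- The limit of an inverse system of topological spaces, realized as the subspace of
compatible families inside the product `∏ i, F.obj i`. -/
def InvLim {I : Type u} [SmallCategory I] (F : I ⥤ TopCat.{u}) : Type u :=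
  {x : ∀ i : I, F.obj i // ∀ {i j : I} (f : i ⟶ j), F.map f (x i) = x j}

noncomputable instance {I : Type u} [SmallCategory I] (F : I ⥤ TopCat.{u}) :
    TopologicalSpace (InvLim F) :=
  inferInstanceAs (TopologicalSpace
    {x : ∀ i : I, F.obj i // ∀ {i j : I} (f : i ⟶ j), F.map f (x i) = x j})

/-- The projection from the limit to the `i`-th term of the system. -/
def InvLim.proj {I : Type u} [SmallCategory I] (F : I ⥤ TopCat.{u}) (i : I) :
    InvLim F → F.obj i := fun x => x.1 i

/-!
The constructible topology of a spectral space is compact Hausdorff and finer than the given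
topology, and spectral maps stay continuous for it. In the product of the constructible topologies
the compatible families form a closed, hence compact, set; this makes the limit and the preimages
of quasicompact opens under the projections quasicompact. By cofilteredness these preimages form
a basis closed under intersection, and a generic point of an irreducible closed subset is
assembled from the generic points of its images.

For (c), given `x ⤳ g y`, the fibres of the maps `Y → X i` over the coordinates of `x` are
constructibly closed, and every finite family of them meets the constructibly compact set of
generalizations of `y`: pass to one index below all of them, where the map is generalizing.
For (d), a set with closed preimage is the image of a constructibly compact set, hence
constructibly closed, and it is stable under specialization because `g` is generalizing; such a
set is closed.
-/

open TopologicalSpace Topology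

theorem isSpectralSpace_iff_spectralSpace (X : Type u) [TopologicalSpace X] :
    IsSpectralSpace X ↔ SpectralSpace X := by
  constructor
  · rintro ⟨hc, ht0, hsober, B, hB, hBc, hBi⟩
    exact
      { toT0Space := ht0, toCompactSpace := hc, toQuasiSober := hsober
        toQuasiSeparatedSpace := .of_isTopologicalBasis (b := ((↑) : B → Set X))
          (by rwa [Subtype.range_coe]) fun U V => hBc _ (hBi _ U.2 _ V.2)
        toPrespectralSpace := .of_isTopologicalBasis hB hBc }
  · intro _
    exact ⟨inferInstance, inferInstance, inferInstance, _, PrespectralSpace.isTopologicalBasis,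
      fun U hU => hU.2,
      fun U hU V hV => ⟨hU.1.inter hV.1, hU.2.inter_of_isOpen hV.2 hU.1 hV.1⟩⟩

theorem isGeneralizing_iff_generalizingMap {X : Type u} {Y : Type v} [TopologicalSpace X]
    [TopologicalSpace Y] {f : X → Y} : IsGeneralizing f ↔ GeneralizingMap f := by
  simp only [IsGeneralizing, GeneralizingMap, Relation.Fibration, specializes_iff_mem_closure]

theorem TopologicalSpace.IsTopologicalBasis.isSpectralMap_of_isCompact_preimage {X Y : Type*}
    [TopologicalSpace X] [TopologicalSpace Y] {B : Set (Set Y)} (hB : IsTopologicalBasis B)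
    {f : X → Y} (hf : Continuous f) (hBf : ∀ U ∈ B, IsCompact (f ⁻¹' U)) : IsSpectralMap f := by
  refine ⟨hf, fun W hW hWc => ?_⟩
  obtain ⟨s, rfl⟩ := eq_sUnion_finset_of_isTopologicalBasis_of_isCompact_open B hB W hWc hW
  rw [Set.preimage_sUnion]
  exact (s.finite_toSet.image _).isCompact_biUnion fun U ⟨V, _, hVU⟩ => hVU ▸ hBf V V.2

section ConstructibleTopology

variable {X Y : Type*} [TopologicalSpace X] [TopologicalSpace Y]

theorem constructibleTopology_le [PrespectralSpace X] :
    constructibleTopology X ≤ ‹TopologicalSpace X› := fun U hU => by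
  obtain ⟨S, hS, rfl⟩ := PrespectralSpace.isTopologicalBasis.open_eq_sUnion hU
  exact (constructibleTopology X).isOpen_sUnion _ fun V hV =>
    (hS hV).2.isOpen_constructibleTopology_of_isOpen (hS hV).1

theorem IsCompact.isClosed_constructibleTopology_of_isOpen {U : Set X} (hc : IsCompact U)
    (ho : IsOpen U) : IsClosed[constructibleTopology X] U :=
  @IsClosed.mk _ (constructibleTopology X) _
    (IsCompact.isOpen_constructibleTopology_of_isClosed (by rwa [compl_compl]) ho.isClosed_compl)

theorem t2Space_constructibleTopology [T0Space X] [PrespectralSpace X] :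
    @T2Space X (constructibleTopology X) := by
  refine @T2Space.mk X (constructibleTopology X) fun x y hxy => ?_
  obtain ⟨O, hO, hxor⟩ := exists_isOpen_xor_mem hxy
  have separate :
      ∀ {a b : X}, a ∈ O → b ∉ O → ∃ U, IsOpen U ∧ IsCompact U ∧ a ∈ U ∧ b ∉ U := fun ha hb =>
    let ⟨U, hU, haU, hUO⟩ :=
      PrespectralSpace.isTopologicalBasis.exists_subset_of_mem_open ha hO
    ⟨U, hU.1, hU.2, haU, fun hbU => hb (hUO hbU)⟩
  rcases hxor with ⟨hx, hy⟩ | ⟨hy, hx⟩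
  · obtain ⟨U, hUo, hUc, hxU, hyU⟩ := separate hx hy
    exact ⟨U, Uᶜ, hUc.isOpen_constructibleTopology_of_isOpen hUo,
      (hUc.isClosed_constructibleTopology_of_isOpen hUo).isOpen_compl, hxU, hyU,
      disjoint_compl_right⟩
  · obtain ⟨U, hUo, hUc, hyU, hxU⟩ := separate hy hx
    exact ⟨Uᶜ, U, (hUc.isClosed_constructibleTopology_of_isOpen hUo).isOpen_compl,
      hUc.isOpen_constructibleTopology_of_isOpen hUo, hxU, hyU, disjoint_compl_left⟩

theorem isClosed_constructibleTopology_singleton [T0Space X] [PrespectralSpace X] (x : X) :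
    IsClosed[constructibleTopology X] {x} :=
  @isClosed_singleton _ (constructibleTopology X)
    (@T2Space.t1Space _ (constructibleTopology X) t2Space_constructibleTopology) _

theorem compactSpace_constructibleTopology [SpectralSpace X] :
    @CompactSpace X (constructibleTopology X) :=
  -- transported from the type synonym `WithConstructibleTopology X`
  @Function.Surjective.compactSpace _ _ _ (constructibleTopology X) _
    (WithTopology.continuous_ofTopology _) _ (WithTopology.ofTopology_surjective _)

theorem IsSpectralMap.continuous_constructibleTopology {f : X → Y} (hf : IsSpectralMap f) :
    Continuous[constructibleTopology X, constructibleTopology Y] f := by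
  rw [constructibleTopology, continuous_generateFrom_iff]
  rintro s (⟨hs, hsc⟩ | ⟨hs, hsc⟩)
  · exact (hf.isCompact_preimage_of_isOpen hs hsc).isOpen_constructibleTopology_of_isOpen
      (hs.preimage hf.continuous)
  · exact IsCompact.isOpen_constructibleTopology_of_isClosed
      (hf.isCompact_preimage_of_isOpen hs.isOpen_compl hsc) (hs.preimage hf.continuous)

theorem IsClosed.isClosed_constructibleTopology [PrespectralSpace X] {S : Set X}
    (hS : IsClosed S) : IsClosed[constructibleTopology X] S :=
  @IsClosed.mk _ (constructibleTopology X) _ (constructibleTopology_le _ hS.isOpen_compl)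

theorem IsClosed.isCompact_constructibleTopology [SpectralSpace X] {S : Set X}
    (hS : IsClosed[constructibleTopology X] S) : @IsCompact X (constructibleTopology X) S :=
  @IsClosed.isCompact _ (constructibleTopology X) _ compactSpace_constructibleTopology hS

theorem PrespectralSpace.specializes_iff [PrespectralSpace X] {x y : X} :
    y ⤳ x ↔ ∀ U, IsOpen U → IsCompact U → x ∈ U → y ∈ U := by
  rw [PrespectralSpace.isTopologicalBasis.nhds_hasBasis.specializes_iff]
  exact ⟨fun h U hU hUc hxU => h U ⟨⟨hU, hUc⟩, hxU⟩,
    fun h U hU => h U hU.1.1 hU.1.2 hU.2⟩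

theorem isClosed_constructibleTopology_setOf_specializes [PrespectralSpace X] (x : X) :
    IsClosed[constructibleTopology X] {y | y ⤳ x} := by
  have hgen : {y | y ⤳ x} = ⋂ U ∈ {U : Set X | IsOpen U ∧ IsCompact U ∧ x ∈ U}, U := by
    ext y
    simp only [Set.mem_ofPred_eq, Set.mem_iInter₂, PrespectralSpace.specializes_iff, and_imp]
  rw [hgen]
  exact @isClosed_biInter _ _ (constructibleTopology X) _ _ fun U hU =>
    hU.2.1.isClosed_constructibleTopology_of_isOpen hU.1

theorem exists_mem_specializes_of_mem_closure [SpectralSpace X] {S : Set X}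
    (hS : IsClosed[constructibleTopology X] S) {x : X} (hx : x ∈ closure S) :
    ∃ z ∈ S, z ⤳ x := by
  let N := {U : Set X // IsOpen U ∧ IsCompact U ∧ x ∈ U}
  have hfin : ∀ t : Finset N, (S ∩ ⋂ U ∈ t, U.1).Nonempty := fun t =>
    Set.inter_comm _ _ ▸ mem_closure_iff.1 hx _ (isOpen_biInter_finset fun U _ => U.2.1)
      (Set.mem_iInter₂.2 fun U _ => U.2.2.2)
  obtain ⟨z, hzS, hz⟩ := @IsCompact.inter_iInter_nonempty X (constructibleTopology X) S N
    hS.isCompact_constructibleTopology (·.1)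
    (fun U => U.2.2.1.isClosed_constructibleTopology_of_isOpen U.2.1) hfin
  exact ⟨z, hzS, PrespectralSpace.specializes_iff.2 fun U hU hUc hxU =>
    Set.mem_iInter.1 hz ⟨U, hU, hUc, hxU⟩⟩

theorem exists_specializes_forall_mem [SpectralSpace X] {ι : Type*} {A : ι → Set X}
    (hA : ∀ i, IsClosed[constructibleTopology X] (A i)) {x : X}
    (h : ∀ t : Finset ι, ∃ z, z ⤳ x ∧ ∀ i ∈ t, z ∈ A i) :
    ∃ z, z ⤳ x ∧ ∀ i, z ∈ A i := by
  have hfin : ∀ t : Finset ι, ({z | z ⤳ x} ∩ ⋂ i ∈ t, A i).Nonempty := fun t =>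
    let ⟨z, hzx, hz⟩ := h t
    ⟨z, hzx, Set.mem_iInter₂.2 hz⟩
  obtain ⟨z, hzx, hz⟩ := @IsCompact.inter_iInter_nonempty X (constructibleTopology X) _ ι
    (isClosed_constructibleTopology_setOf_specializes x).isCompact_constructibleTopology A hA hfin
  exact ⟨z, hzx, Set.mem_iInter.1 hz⟩

theorem StableUnderSpecialization.isClosed_of_isClosed_constructibleTopology [SpectralSpace X]
    {S : Set X} (hS : StableUnderSpecialization S) (hS' : IsClosed[constructibleTopology X] S) :
    IsClosed S :=
  closure_subset_iff_isClosed.1 fun _ hx =>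
    let ⟨_, hzS, hzx⟩ := exists_mem_specializes_of_mem_closure hS' hx
    hS hzx hzS

theorem IsSpectralMap.isQuotientMap_of_generalizingMap [SpectralSpace X] [SpectralSpace Y]
    {f : X → Y} (hf : IsSpectralMap f) (hsurj : Function.Surjective f)
    (hgen : GeneralizingMap f) : IsQuotientMap f := by
  refine isQuotientMap_iff_isClosed.2 ⟨hsurj, fun C => ⟨fun hC => hC.preimage hf.continuous,
    fun hC => ?_⟩⟩
  have hstable : StableUnderSpecialization C := by
    rintro x y hxy hx
    obtain ⟨y, rfl⟩ := hsurj y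
    obtain ⟨y', hy'y, rfl⟩ := hgen hxy
    exact hy'y.mem_closed hC hx
  have hconstr : IsClosed[constructibleTopology Y] C := by
    rw [← Set.image_preimage_eq C hsurj]
    exact @IsCompact.isClosed _ (constructibleTopology Y) t2Space_constructibleTopology _
      (@IsCompact.image _ _ (constructibleTopology X) (constructibleTopology Y) _ _
        hC.isClosed_constructibleTopology.isCompact_constructibleTopology
        hf.continuous_constructibleTopology)
  exact hstable.isClosed_of_isClosed_constructibleTopology hconstr

end ConstructibleTopology

abbrev piConstructibleTopology {ι : Type*} (X : ι → Type*) [∀ i, TopologicalSpace (X i)] :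
    TopologicalSpace (∀ i, X i) :=
  @Pi.topologicalSpace ι X fun i => constructibleTopology (X i)

theorem continuous_apply_piConstructibleTopology {ι : Type*} {X : ι → Type*}
    [∀ i, TopologicalSpace (X i)] (i : ι) :
    Continuous[piConstructibleTopology X, constructibleTopology (X i)] fun x => x i :=
  continuous_apply (T := fun i => constructibleTopology (X i)) i

theorem isCompact_of_isClosed_piConstructibleTopology {ι : Type*} {X : ι → Type*}
    [∀ i, TopologicalSpace (X i)] [∀ i, SpectralSpace (X i)] {A : Set (∀ i, X i)}
    (hA : IsClosed[piConstructibleTopology X] A) : IsCompact A := by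
  have hcompact := @IsClosed.isCompact _ (piConstructibleTopology X) _
    (@Pi.compactSpace ι X (fun i => constructibleTopology (X i))
      fun i => compactSpace_constructibleTopology) hA
  simpa using @IsCompact.image _ _ (piConstructibleTopology X) _ _ id hcompact
    (continuous_id_of_le (iInf_mono fun i => induced_mono constructibleTopology_le))

namespace InvLim

variable {I : Type u} [SmallCategory I] (F : I ⥤ TopCat.{u})

theorem continuous_proj (i : I) : Continuous (proj F i) :=
  (continuous_apply i).comp continuous_subtype_val

theorem map_comp_proj {i j : I} (f : i ⟶ j) : F.map f ∘ proj F i = proj F j :=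
  funext fun x => x.2 f

theorem preimage_proj_eq {i j : I} (f : i ⟶ j) (U : Set (F.obj j)) :
    proj F j ⁻¹' U = proj F i ⁻¹' (F.map f ⁻¹' U) := by
  rw [← map_comp_proj F f, Set.preimage_comp]

theorem specializes_iff {x y : InvLim F} : x ⤳ y ↔ ∀ i, proj F i x ⤳ proj F i y :=
  (subtype_specializes_iff x y).trans specializes_pi

theorem isTopologicalBasis_preimage_proj [IsCofiltered I] (T : ∀ i, Set (Set (F.obj i)))
    (hT : ∀ i, IsTopologicalBasis (T i)) (univ_mem : ∀ i, Set.univ ∈ T i)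
    (inter_mem : ∀ i, ∀ U ∈ T i, ∀ V ∈ T i, U ∩ V ∈ T i)
    (preimage_mem : ∀ ⦃i j : I⦄ (f : i ⟶ j), ∀ V ∈ T j, F.map f ⁻¹' V ∈ T i) :
    IsTopologicalBasis {U | ∃ i, ∃ V ∈ T i, U = proj F i ⁻¹' V} :=
  -- the point of `TopCat.limitCone F` is `InvLim F` by definition
  TopCat.isTopologicalBasis_cofiltered_limit F (TopCat.limitCone F) (TopCat.limitConeIsLimit F)
    T hT univ_mem (fun i U V hU hV => inter_mem i U hU V hV) fun _ _ f V hV => preimage_mem f V hV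

theorem isTopologicalBasis_preimage_proj_compactOpens [IsCofiltered I]
    [∀ i, SpectralSpace (F.obj i)] (hF : ∀ (i j : I) (f : i ⟶ j), IsSpectralMap (F.map f)) :
    IsTopologicalBasis
      {U | ∃ i, ∃ V : Set (F.obj i), (IsOpen V ∧ IsCompact V) ∧ U = proj F i ⁻¹' V} :=
  isTopologicalBasis_preimage_proj F (fun _ => {V | IsOpen V ∧ IsCompact V})
    (fun _ => PrespectralSpace.isTopologicalBasis) (fun _ => ⟨isOpen_univ, isCompact_univ⟩)
    (fun _ _ hU _ hV => ⟨hU.1.inter hV.1, hU.2.inter_of_isOpen hV.2 hU.1 hV.1⟩)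
    fun i j f _ hV => ⟨hV.1.preimage (F.map f).hom.continuous,
      (hF i j f).isCompact_preimage_of_isOpen hV.1 hV.2⟩

theorem isClosed_range_val [∀ i, T0Space (F.obj i)] [∀ i, PrespectralSpace (F.obj i)]
    (hF : ∀ (i j : I) (f : i ⟶ j), IsSpectralMap (F.map f)) :
    IsClosed[piConstructibleTopology fun i => F.obj i]
      (Set.range (Subtype.val : InvLim F → ∀ i, F.obj i)) := by
  have hrange : Set.range (Subtype.val : InvLim F → ∀ i, F.obj i) =
      ⋂ a : Σ i j : I, i ⟶ j, {x | F.map a.2.2 (x a.1) = x a.2.1} := by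
    rw [Subtype.range_coe_subtype]
    exact Set.ext fun x => ⟨fun h => Set.mem_iInter.2 fun a => h a.2.2,
      fun h _ _ f => Set.mem_iInter.1 h ⟨_, _, f⟩⟩
  rw [hrange]
  refine @isClosed_iInter _ _ (piConstructibleTopology fun i => F.obj i) _ fun ⟨i, j, f⟩ =>
    @isClosed_eq _ _ (constructibleTopology (F.obj j)) (piConstructibleTopology fun i => F.obj i)
      t2Space_constructibleTopology _ _ ?_ (continuous_apply_piConstructibleTopology j)
  exact @Continuous.comp _ _ _ (piConstructibleTopology fun i => F.obj i)
    (constructibleTopology (F.obj i)) (constructibleTopology (F.obj j)) _ _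
    (hF i j f).continuous_constructibleTopology (continuous_apply_piConstructibleTopology i)

theorem isCompact_preimage_val [∀ i, SpectralSpace (F.obj i)]
    (hF : ∀ (i j : I) (f : i ⟶ j), IsSpectralMap (F.map f)) {A : Set (∀ i, F.obj i)}
    (hA : IsClosed[piConstructibleTopology fun i => F.obj i] A) :
    IsCompact (Subtype.val ⁻¹' A : Set (InvLim F)) := by
  have hval : IsEmbedding (Subtype.val : InvLim F → ∀ i, F.obj i) := IsEmbedding.subtypeVal
  have himage : (Subtype.val : InvLim F → ∀ i, F.obj i) '' (Subtype.val ⁻¹' A) =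
      A ∩ Set.range Subtype.val :=
    Set.image_preimage_eq_inter_range
  refine hval.isCompact_iff.2 (himage ▸ ?_)
  exact isCompact_of_isClosed_piConstructibleTopology
    (@IsClosed.inter _ _ _ (piConstructibleTopology fun i => F.obj i) hA (isClosed_range_val F hF))

theorem compactSpace [∀ i, SpectralSpace (F.obj i)]
    (hF : ∀ (i j : I) (f : i ⟶ j), IsSpectralMap (F.map f)) : CompactSpace (InvLim F) where
  isCompact_univ :=
    isCompact_preimage_val F hF (@isClosed_univ _ (piConstructibleTopology fun i => F.obj i))

theorem isSpectralMap_proj [∀ i, SpectralSpace (F.obj i)]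
    (hF : ∀ (i j : I) (f : i ⟶ j), IsSpectralMap (F.map f)) (i : I) :
    IsSpectralMap (proj F i) :=
  ⟨continuous_proj F i, fun _ hU hUc => isCompact_preimage_val F hF <|
    @IsClosed.preimage _ _ (piConstructibleTopology fun i => F.obj i)
      (constructibleTopology (F.obj i)) _
      (continuous_apply_piConstructibleTopology i) _
      (hUc.isClosed_constructibleTopology_of_isOpen hU)⟩

theorem quasiSober [IsCofiltered I] [∀ i, T0Space (F.obj i)] [∀ i, QuasiSober (F.obj i)] :
    QuasiSober (InvLim F) := by
  refine ⟨fun {S} hS hSc => ?_⟩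
  have hη : ∀ i, ∃ η, IsGenericPoint η (closure (proj F i '' S)) := fun i =>
    QuasiSober.sober (hS.image _ (continuous_proj F i).continuousOn).closure isClosed_closure
  choose η hη using hη
  have hcompat : ∀ {i j : I} (f : i ⟶ j), F.map f (η i) = η j := fun {i j} f => by
    have h := (hη i).image (F.map f).hom.continuous
    rw [closure_image_closure (F.map f).hom.continuous, ← Set.image_comp, map_comp_proj] at h
    exact h.eq (hη j)
  let ηS : InvLim F := ⟨η, hcompat⟩
  have hbasis := isTopologicalBasis_preimage_proj F (fun _ => {V | IsOpen V})
    (fun _ => isTopologicalBasis_opens) (fun _ => isOpen_univ) (fun _ _ hU _ hV => hU.inter hV)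
    fun _ _ f _ hV => hV.preimage (F.map f).hom.continuous
  have hmem : ηS ∈ S := by
    refine hSc.closure_eq ▸ hbasis.mem_closure_iff.2 ?_
    rintro _ ⟨i, V, hV, rfl⟩ hηV
    obtain ⟨_, ⟨z, hzS, rfl⟩, hzV⟩ :=
      (closure_inter_open_nonempty_iff hV).1 (((hη i).mem_open_set_iff hV).1 hηV)
    exact ⟨z, hzV, hzS⟩
  refine ⟨ηS, subset_antisymm (closure_minimal (Set.singleton_subset_iff.2 hmem) hSc)
    fun z hz => specializes_iff_mem_closure.1 ?_⟩
  exact (specializes_iff F).2 fun i => (hη i).specializes (subset_closure ⟨z, hz, rfl⟩)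

theorem spectralSpace [IsCofiltered I] [∀ i, SpectralSpace (F.obj i)]
    (hF : ∀ (i j : I) (f : i ⟶ j), IsSpectralMap (F.map f)) : SpectralSpace (InvLim F) := by
  refine (isSpectralSpace_iff_spectralSpace _).1 ⟨compactSpace F hF,
    inferInstanceAs (T0Space {x : ∀ i, F.obj i // _}), quasiSober F, _,
    isTopologicalBasis_preimage_proj_compactOpens F hF, ?_, ?_⟩
  · rintro _ ⟨i, V, hV, rfl⟩
    exact (isSpectralMap_proj F hF i).isCompact_preimage_of_isOpen hV.1 hV.2
  · rintro _ ⟨i, U, hU, rfl⟩ _ ⟨j, V, hV, rfl⟩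
    obtain ⟨k, f, g, -⟩ := IsCofilteredOrEmpty.cone_objs i j
    have hfU := hU.1.preimage (F.map f).hom.continuous
    have hgV := hV.1.preimage (F.map g).hom.continuous
    have hfUc := (hF _ _ f).isCompact_preimage_of_isOpen hU.1 hU.2
    have hgVc := (hF _ _ g).isCompact_preimage_of_isOpen hV.1 hV.2
    refine ⟨k, _, ⟨hfU.inter hgV, hfUc.inter_of_isOpen hgVc hfU hgV⟩, ?_⟩
    rw [Set.preimage_inter, ← preimage_proj_eq, ← preimage_proj_eq]

theorem isSpectralMap_iff [IsCofiltered I] [∀ i, SpectralSpace (F.obj i)]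
    (hF : ∀ (i j : I) (f : i ⟶ j), IsSpectralMap (F.map f)) {Y : Type*} [TopologicalSpace Y]
    {g : Y → InvLim F} (hg : Continuous g) :
    IsSpectralMap g ↔ ∀ i, IsSpectralMap (proj F i ∘ g) :=
  ⟨fun h i => (isSpectralMap_proj F hF i).comp h, fun h =>
    (isTopologicalBasis_preimage_proj_compactOpens F hF).isSpectralMap_of_isCompact_preimage hg
      fun _ ⟨i, _, hV, hU⟩ => hU ▸ (h i).isCompact_preimage_of_isOpen hV.1 hV.2⟩

theorem generalizingMap [IsCofiltered I] [∀ i, T0Space (F.obj i)]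
    [∀ i, PrespectralSpace (F.obj i)] {Y : Type*} [TopologicalSpace Y] [SpectralSpace Y]
    {g : Y → InvLim F} (hg : ∀ i, IsSpectralMap (proj F i ∘ g))
    (hgen : ∀ i, GeneralizingMap (proj F i ∘ g)) : GeneralizingMap g := by
  intro y x hxy
  have hfibre : ∀ i, IsClosed[constructibleTopology Y] ((proj F i ∘ g) ⁻¹' {proj F i x}) :=
    fun i => @IsClosed.preimage _ _ (constructibleTopology Y) (constructibleTopology (F.obj i)) _
      (hg i).continuous_constructibleTopology _ (isClosed_constructibleTopology_singleton _)
  have hfin :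
      ∀ t : Finset I, ∃ y', y' ⤳ y ∧ ∀ i ∈ t, y' ∈ (proj F i ∘ g) ⁻¹' {proj F i x} := by
    intro t
    obtain ⟨k, hk⟩ := IsCofiltered.inf_objs_exists t
    obtain ⟨y', hy'y, hy'k⟩ := hgen k (hxy.map (continuous_proj F k))
    refine ⟨y', hy'y, fun i hi => ?_⟩
    change proj F i (g y') = proj F i x
    rw [← map_comp_proj F (hk hi).some]
    exact congrArg (F.map _) hy'k
  obtain ⟨y', hy'y, hy'⟩ := exists_specializes_forall_mem hfibre hfin
  exact ⟨y', hy'y, Subtype.ext (funext hy')⟩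

end InvLim

/-- Let `(X_i)_{i ∈ I}` be a cofiltered inverse system of spectral spaces with spectral
transition maps, with limit `X = lim_i X_i` realized inside the product. Then (a) `X` is
spectral and the projections are spectral; (b) a continuous map `Y → X` from a spectral
space is spectral iff all composites `Y → X_i` are spectral; (c) if `Y → X` is a spectral
map from a spectral space whose composites `Y → X_i` are all generalizing, then `Y → X` is
generalizing, and (d) if it is moreover surjective, then it is a quotient map. -/
theorem invLim_spectral_of_cofiltered_system
    {I : Type u} [SmallCategory I] [IsCofiltered I] (F : I ⥤ TopCat.{u})
    (hobj : ∀ i : I, IsSpectralSpace (F.obj i))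
    (hmap : ∀ (i j : I) (f : i ⟶ j), IsSpectralMap (F.map f)) :
    IsSpectralSpace (InvLim F) ∧
      (∀ i : I, IsSpectralMap (InvLim.proj F i)) ∧
      (∀ (Y : Type u) [TopologicalSpace Y], IsSpectralSpace Y →
        ∀ g : Y → InvLim F, Continuous g →
          (IsSpectralMap g ↔ ∀ i : I, IsSpectralMap (InvLim.proj F i ∘ g))) ∧
      (∀ (Y : Type u) [TopologicalSpace Y], IsSpectralSpace Y →
        ∀ g : Y → InvLim F, IsSpectralMap g →
          (∀ i : I, IsGeneralizing (InvLim.proj F i ∘ g)) →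
            IsGeneralizing g ∧
              (Function.Surjective g →
                ∀ U : Set (InvLim F), IsOpen U ↔ IsOpen (g ⁻¹' U))) := by
  have hX : ∀ i, SpectralSpace (F.obj i) := fun i =>
    (isSpectralSpace_iff_spectralSpace _).1 (hobj i)
  have hlim : SpectralSpace (InvLim F) := InvLim.spectralSpace F hmap
  refine ⟨(isSpectralSpace_iff_spectralSpace _).2 hlim, InvLim.isSpectralMap_proj F hmap,
    fun Y _ _ g hg => InvLim.isSpectralMap_iff F hmap hg, fun Y _ hY g hg hgen => ?_⟩
  have hY' : SpectralSpace Y := (isSpectralSpace_iff_spectralSpace Y).1 hY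
  have hg' : GeneralizingMap g :=
    InvLim.generalizingMap F (fun i => (InvLim.isSpectralMap_proj F hmap i).comp hg)
      fun i => isGeneralizing_iff_generalizingMap.1 (hgen i)
  exact ⟨isGeneralizing_iff_generalizingMap.2 hg', fun hsurj U =>
    (hg.isQuotientMap_of_generalizingMap hsurj hg').isOpen_preimage.symm⟩
end

section
/- Let f : S' → S be a spectral map of spectral spaces, and let p : S̃ → S be a surjective, spectral, generalizing map of spectral spaces. Let S̃' = S' ×_S S̃ = { (x, y) ∈ S' × S̃ : f(x) = p(y) } with the subspace topology of the product, and let f̃ : S̃' → S̃ be the second projection. If f̃ is a local homeomorphism, then f is a local homeomorphism. -/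
/-! The constructible topology of a spectral space is compact and finer than the given topology,
and quasicompact opens are clopen in it. Hence a surjective, spectral, generalizing map `q` is a
quotient map: if `q⁻¹ A` is open, then `Aᶜ` is the image of a constructibly compact set and is
stable under specialization, and such an image is closed. The same argument, with the fibre
products computed in constructible topologies, shows that `S̃' ×_S̃ S̃' → S' ×_S S'` is a quotient
map.

Now `p⁻¹ (f U) = f̃ (pr₁⁻¹ U)` is open, so `f` is open; and the preimage of the diagonal of
`S' ×_S S'` is the diagonal of `S̃' ×_S̃ S̃'`, which is open since `f̃` is locally injective, so `f`
is locally injective. A continuous, open, locally injective map is a local homeomorphism. -/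

universe u v

open Set Filter Topology TopologicalSpace Function WithTopology

theorem IsSpectralSpace.spectralSpace {X : Type*} [TopologicalSpace X] (h : IsSpectralSpace X) :
    SpectralSpace X := by
  obtain ⟨hc, h0, hs, B, hB, hBc, hBi⟩ := h
  have hB' : IsTopologicalBasis (range ((↑) : B → Set X)) := by rwa [Subtype.range_coe]
  exact
    { toT0Space := h0
      toCompactSpace := hc
      toQuasiSober := hs
      toQuasiSeparatedSpace := QuasiSeparatedSpace.of_isTopologicalBasis hB'
        fun U V => hBc _ (hBi _ U.2 _ V.2)
      toPrespectralSpace := PrespectralSpace.of_isTopologicalBasis hB hBc }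

theorem IsGeneralizing.generalizingMap {X Y : Type*} [TopologicalSpace X] [TopologicalSpace Y]
    {f : X → Y} (hf : IsGeneralizing f) : GeneralizingMap f := fun x y hy => by
  simpa only [specializes_iff_mem_closure] using hf x y (specializes_iff_mem_closure.mp hy)

section Descent

variable {K X Y : Type*} [TopologicalSpace K] [TopologicalSpace X] [TopologicalSpace Y]

theorem isClosed_image_of_stableUnderSpecialization {g : K → Y} {B : Set (Set Y)}
    (hB : IsTopologicalBasis B) (hcl : ∀ U ∈ B, IsClosed (g ⁻¹' U)) {C : Set K}
    (hC : IsCompact C) (hgC : StableUnderSpecialization (g '' C)) : IsClosed (g '' C) := by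
  refine isClosed_of_closure_subset fun y hy => ?_
  have : (comap g (𝓝 y) ⊓ 𝓟 C).NeBot := by
    rw [inf_principal_neBot_iff]
    rintro _ ⟨V, hV, hVU⟩
    obtain ⟨_, hzV, c, hc, rfl⟩ := mem_closure_iff_nhds.mp hy V hV
    exact ⟨c, hVU hzV, hc⟩
  obtain ⟨x, hxC, hx⟩ := @hC _ this inf_le_right
  have hxy : g x ⤳ y := by
    refine specializes_iff_forall_open.mpr fun s hs hys => ?_
    obtain ⟨U, hUB, hyU, hUs⟩ := hB.exists_subset_of_mem_open hys hs
    exact hUs <| (hcl U hUB).closure_subset <|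
      hx.mem_closure_of_mem _ (mem_inf_of_left (preimage_mem_comap (hB.mem_nhds hUB hyU)))
  exact hgC hxy ⟨x, hxC, rfl⟩

theorem GeneralizingMap.isQuotientMap [CompactSpace K] {q : X → Y} (hq : GeneralizingMap q)
    (hqc : Continuous q) (hqs : Surjective q) {π : K → X} (hπ : Continuous π)
    (hπs : Surjective π) {B : Set (Set Y)} (hB : IsTopologicalBasis B)
    (hcl : ∀ U ∈ B, IsClosed (π ⁻¹' (q ⁻¹' U))) : IsQuotientMap q := by
  refine isQuotientMap_iff_isClosed.mpr
    ⟨hqs, fun A => ⟨fun hA => hA.preimage hqc, fun hA => ?_⟩⟩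
  have hsurj : Surjective (q ∘ π) := hqs.comp hπs
  rw [← hsurj.image_preimage A]
  refine isClosed_image_of_stableUnderSpecialization (g := q ∘ π) hB hcl
    (hA.preimage hπ).isCompact ?_
  rw [hsurj.image_preimage, ← stableUnderGeneralization_compl_iff, ← hqs.image_preimage Aᶜ]
  exact hA.isOpen_compl.stableUnderGeneralization.image hq

end Descent

namespace WithConstructibleTopology

variable {X : Type*} [TopologicalSpace X]

theorem isClopen_preimage_ofTopology {U : Set X} (hUo : IsOpen U) (hUc : IsCompact U) :
    IsClopen (ofTopology ⁻¹' U : Set (WithConstructibleTopology X)) := by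
  have hUc' : IsCompact Uᶜᶜ := by rwa [compl_compl]
  exact ⟨isOpen_compl_iff.mp <| hUc'.isOpen_constructibleTopology_of_isClosed hUo.isClosed_compl,
    hUc.isOpen_constructibleTopology_of_isOpen hUo⟩

theorem continuous_ofTopology [PrespectralSpace X] :
    Continuous (ofTopology : WithConstructibleTopology X → X) :=
  PrespectralSpace.isTopologicalBasis.continuous_iff.mpr fun _ hU =>
    (isClopen_preimage_ofTopology hU.1 hU.2).isOpen

instance t2Space [T0Space X] [PrespectralSpace X] : T2Space (WithConstructibleTopology X) := by
  refine ⟨fun x y hxy => ?_⟩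
  obtain ⟨U, hUo, hU⟩ := exists_isOpen_xor_mem ((ofTopology_injective _).ne hxy)
  rcases hU with ⟨hxU, hyU⟩ | ⟨hyU, hxU⟩
  · obtain ⟨V, ⟨hVo, hVc⟩, hxV, hVU⟩ :=
      PrespectralSpace.isTopologicalBasis.exists_subset_of_mem_open hxU hUo
    have hV := isClopen_preimage_ofTopology hVo hVc
    exact ⟨_, _, hV.isOpen, hV.compl.isOpen, hxV, fun hyV => hyU (hVU hyV),
      disjoint_compl_right⟩
  · obtain ⟨V, ⟨hVo, hVc⟩, hyV, hVU⟩ :=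
      PrespectralSpace.isTopologicalBasis.exists_subset_of_mem_open hyU hUo
    have hV := isClopen_preimage_ofTopology hVo hVc
    exact ⟨_, _, hV.compl.isOpen, hV.isOpen, fun hxV => hxU (hVU hxV), hyV,
      disjoint_compl_left⟩

end WithConstructibleTopology

open WithConstructibleTopology

theorem IsSpectralMap.continuous_withConstructibleTopology {X Y : Type*} [TopologicalSpace X]
    [TopologicalSpace Y] {f : X → Y} (hf : IsSpectralMap f) :
    Continuous (toTopology (constructibleTopology Y) ∘ f ∘ ofTopology :
      WithConstructibleTopology X → WithConstructibleTopology Y) := by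
  have h : Continuous[_, constructibleTopology Y]
      (f ∘ ofTopology : WithConstructibleTopology X → Y) := by
    refine continuous_generateFrom_iff.mpr ?_
    rintro s (⟨hso, hsc⟩ | ⟨hsc, hsc'⟩)
    · exact (isClopen_preimage_ofTopology (hso.preimage hf.continuous)
        (hf.isCompact_preimage_of_isOpen hso hsc)).isOpen
    · have := (isClopen_preimage_ofTopology (hsc.isOpen_compl.preimage hf.continuous)
        (hf.isCompact_preimage_of_isOpen hsc.isOpen_compl hsc')).compl.isOpen
      rwa [← preimage_compl, ← preimage_compl, compl_compl] at this
  exact @Continuous.comp _ _ _ _ (constructibleTopology Y) _ _ _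
    (WithTopology.continuous_toTopology _) h

theorem IsSpectralMap.isQuotientMap_of_generalizingMap_s10 {X Y : Type*} [TopologicalSpace X]
    [TopologicalSpace Y] [CompactSpace X] [QuasiSober X] [PrespectralSpace X]
    [QuasiSeparatedSpace X] [PrespectralSpace Y] {f : X → Y} (hf : IsSpectralMap f)
    (hfs : Surjective f) (hfg : GeneralizingMap f) : IsQuotientMap f :=
  hfg.isQuotientMap hf.continuous hfs WithConstructibleTopology.continuous_ofTopology
    (ofTopology_surjective _)
    PrespectralSpace.isTopologicalBasis fun _ hU =>
      (isClopen_preimage_ofTopology (hU.1.preimage hf.continuous)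
        (hf.isCompact_preimage_of_isOpen hU.1 hU.2)).isClosed

section Pullback

open Function.Pullback Function.PullbackSelf

variable {X Y Z : Type*} {f : X → Y} {g : Z → Y}

theorem Function.Pullback.image_snd_preimage_fst (s : Set X) :
    snd '' (fst ⁻¹' s : Set (f.Pullback g)) = g ⁻¹' (f '' s) := by
  ext z
  constructor
  · rintro ⟨⟨⟨x, z⟩, h⟩, hx, rfl⟩
    exact ⟨x, hx, h⟩
  · rintro ⟨x, hx, h⟩
    exact ⟨⟨(x, z), h⟩, hx, rfl⟩

theorem Function.PullbackSelf.map_fst_surjective (hg : Surjective g) :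
    Surjective (map_fst : (snd : f.Pullback g → Z).PullbackSelf → f.PullbackSelf) := by
  rintro ⟨⟨x₁, x₂⟩, h⟩
  obtain ⟨z, hz⟩ := hg (f x₁)
  exact ⟨⟨(⟨(x₁, z), hz.symm⟩, ⟨(x₂, z), h ▸ hz.symm⟩), rfl⟩, rfl⟩

variable [TopologicalSpace X] [TopologicalSpace Y] [TopologicalSpace Z]

theorem GeneralizingMap.pullbackSelf_map_fst (hf : Continuous f) (hg : GeneralizingMap g) :
    GeneralizingMap (map_fst : (snd : f.Pullback g → Z).PullbackSelf → f.PullbackSelf) := by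
  rintro ⟨⟨⟨⟨x₁, z⟩, h₁⟩, ⟨⟨x₂, z'⟩, h₂⟩⟩, rfl : z = z'⟩ ⟨⟨y₁, y₂⟩, hy⟩ hspec
  replace hspec : y₁ ⤳ x₁ ∧ y₂ ⤳ x₂ :=
    specializes_prod.mp ((subtype_specializes_iff _ _).mp hspec)
  obtain ⟨z', hz', hgz'⟩ := hg (h₁ ▸ hspec.1.map hf : f y₁ ⤳ g z)
  refine ⟨⟨(⟨(y₁, z'), hgz'.symm⟩, ⟨(y₂, z'), hy ▸ hgz'.symm⟩), rfl⟩, ?_, rfl⟩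
  simp only [subtype_specializes_iff, specializes_prod]
  exact ⟨⟨hspec.1, hz'⟩, hspec.2, hz'⟩

theorem Function.PullbackSelf.isQuotientMap_map_fst [CompactSpace X] [QuasiSober X]
    [PrespectralSpace X] [QuasiSeparatedSpace X] [T0Space Y] [PrespectralSpace Y]
    [CompactSpace Z] [QuasiSober Z] [PrespectralSpace Z] [QuasiSeparatedSpace Z]
    (hf : IsSpectralMap f) (hg : IsSpectralMap g) (hgs : Surjective g)
    (hgg : GeneralizingMap g) :
    IsQuotientMap (map_fst : (snd : f.Pullback g → Z).PullbackSelf → f.PullbackSelf) := by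
  -- the source of `map_fst`, rebuilt from constructible topologies
  let C : Set ((WithConstructibleTopology X × WithConstructibleTopology X) ×
      WithConstructibleTopology Z) :=
    {w | f w.1.1.ofTopology = g w.2.ofTopology ∧ f w.1.2.ofTopology = g w.2.ofTopology}
  have hC : IsClosed C := by
    have hf' := hf.continuous_withConstructibleTopology
    have hg' := hg.continuous_withConstructibleTopology
    simpa only [C, ofPred_and, Function.comp_apply, toTopology_inj] using
      (isClosed_eq (hf'.comp (continuous_fst.comp continuous_fst)) (hg'.comp continuous_snd)).inter
        (isClosed_eq (hf'.comp (continuous_snd.comp continuous_fst)) (hg'.comp continuous_snd))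
  have : CompactSpace C := isCompact_iff_compactSpace.mp hC.isCompact
  let π : C → (snd : f.Pullback g → Z).PullbackSelf := fun w =>
    ⟨(⟨(w.1.1.1.ofTopology, w.1.2.ofTopology), w.2.1⟩,
      ⟨(w.1.1.2.ofTopology, w.1.2.ofTopology), w.2.2⟩), rfl⟩
  have hπ : Continuous π := by
    have hX := WithConstructibleTopology.continuous_ofTopology (X := X)
    have hZ := WithConstructibleTopology.continuous_ofTopology (X := Z)
    dsimp only [π]
    fun_prop
  have hπs : Surjective π := by
    rintro ⟨⟨⟨⟨x₁, z⟩, h₁⟩, ⟨⟨x₂, z'⟩, h₂⟩⟩, rfl : z = z'⟩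
    exact ⟨⟨((toTopology _ x₁, toTopology _ x₂), toTopology _ z), h₁, h₂⟩, rfl⟩
  have hfst : Continuous (fst : f.Pullback g → X) := continuous_fst.comp continuous_subtype_val
  refine (hgg.pullbackSelf_map_fst hf.continuous).isQuotientMap (hfst.mapPullback hfst)
    (map_fst_surjective hgs) hπ hπs
    ((PrespectralSpace.isTopologicalBasis.prod PrespectralSpace.isTopologicalBasis).isInducing
      IsInducing.subtypeVal) ?_
  rintro _ ⟨_, ⟨U, ⟨hUo, hUc⟩, V, ⟨hVo, hVc⟩, rfl⟩, rfl⟩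
  exact ((isClopen_preimage_ofTopology hUo hUc).isClosed.preimage
    (continuous_fst.comp (continuous_fst.comp continuous_subtype_val))).inter
    ((isClopen_preimage_ofTopology hVo hVc).isClosed.preimage
    (continuous_snd.comp (continuous_fst.comp continuous_subtype_val)))

end Pullback

theorem IsLocallyInjective.isLocalHomeomorph {X Y : Type*} [TopologicalSpace X]
    [TopologicalSpace Y] {f : X → Y} (hf : IsLocallyInjective f) (hfc : Continuous f)
    (hfo : IsOpenMap f) : IsLocalHomeomorph f := by
  refine isLocalHomeomorph_iff_isOpenEmbedding_restrict.mpr fun x => ?_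
  obtain ⟨U, hU, hxU, hinj⟩ := hf x
  exact ⟨U, hU.mem_nhds hxU, .of_continuous_injective_isOpenMap
    (hfc.comp continuous_subtype_val) hinj.injective (hfo.comp hU.isOpenMap_subtype_val)⟩

/-- Let `f : S' → S` be a spectral map of spectral spaces and `p : S̃ → S` a surjective,
spectral, generalizing map of spectral spaces. If the pullback
`f̃ : S' ×_S S̃ → S̃` of `f` along `p` is a local homeomorphism, then so is `f`. -/
theorem isLocalHomeomorph_of_isLocalHomeomorph_pullback
    {S' S St : Type u} [TopologicalSpace S'] [TopologicalSpace S] [TopologicalSpace St]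
    (hS' : IsSpectralSpace S') (hS : IsSpectralSpace S) (hSt : IsSpectralSpace St)
    (f : S' → S) (hf : IsSpectralMap f)
    (p : St → S) (hp : IsSpectralMap p) (hps : Function.Surjective p)
    (hpg : IsGeneralizing p)
    (hlocal : IsLocalHomeomorph fun q : {q : S' × St // f q.1 = p q.2} => q.1.2) :
    IsLocalHomeomorph f := by
  have := hS'.spectralSpace
  have := hS.spectralSpace
  have := hSt.spectralSpace
  have hf_open : IsOpenMap f := fun U hU => by
    rw [← (hp.isQuotientMap_of_generalizingMap_s10 hps hpg.generalizingMap).isOpen_preimage,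
      ← Function.Pullback.image_snd_preimage_fst]
    exact hlocal.isOpenMap _ (hU.preimage (continuous_fst.comp continuous_subtype_val))
  have hf_inj : IsLocallyInjective f := by
    rw [isLocallyInjective_iff_isOpen_diagonal,
      ← (Function.PullbackSelf.isQuotientMap_map_fst hf hp hps hpg.generalizingMap).isOpen_preimage,
      preimage_map_fst_pullbackDiagonal, ← isLocallyInjective_iff_isOpen_diagonal]
    exact hlocal.isLocallyInjective
  exact hf_inj.isLocalHomeomorph hf.continuous hf_open
end
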